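/- arXiv:1406.2915 — 2 statements merged into one kernel-verified Lean document; each statement's English description precedes it below -/
import Mathlib

section
/- For the weighted space H_{ν,0}(ℝ,H) of H-valued functions f with t ↦ f(t)e^{-νt} in L²(ℝ,H), ν>0, the time derivative operator ∂₀ (closure of differentiation on smooth compactly supported functions) satisfies Re⟨∂₀u|u⟩_{ν,0,0} = ν|u|²_{ν,0,0} for all u in its domain; in particular ∂₀ is strictly positive definite as an operator on the real Hilbert space (H_{ν,0}(ℝ,H), Re⟨·|·⟩). -/
open MeasureTheory
noncomputable section

variable {H : Type*} [NormedAddCommGroup H] [InnerProductSpace ℂ H] [CompleteSpace H]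

/-- the exponentially weighted measure `exp(-2νt) dt` on `ℝ`. -/
def wMeasure (ν : ℝ) : Measure ℝ :=
  (volume : Measure ℝ).withDensity fun t => ENNReal.ofReal (Real.exp (-2 * ν * t))

/-- the weighted space `H_{ν,0}(ℝ, H)`. -/
abbrev Hnu (H : Type*) [NormedAddCommGroup H] (ν : ℝ) := Lp H 2 (wMeasure ν)

/-- graph of the time derivative on smooth compactly supported `H`-valued functions. -/
def derivGraph (H : Type*) [NormedAddCommGroup H] [InnerProductSpace ℂ H] (ν : ℝ) :
    Submodule ℂ (Hnu H ν × Hnu H ν) :=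
  Submodule.span ℂ {p | ∃ (f : ℝ → H) (hf : MemLp f 2 (wMeasure ν))
    (hf' : MemLp (deriv f) 2 (wMeasure ν)),
    ContDiff ℝ (⊤ : ℕ∞) f ∧ HasCompactSupport f ∧ p = (hf.toLp f, hf'.toLp (deriv f))}

/-- `∂₀`: the closure of the time derivative on smooth compactly supported functions. -/
def D0 (H : Type*) [NormedAddCommGroup H] [InnerProductSpace ℂ H] [CompleteSpace H] (ν : ℝ) :
    Hnu H ν →ₗ.[ℂ] Hnu H ν :=
  (derivGraph H ν).toLinearPMap.closure

-- finite on compacts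
instance wfin (ν : ℝ) : IsFiniteMeasureOnCompacts (wMeasure ν) := by
  constructor
  intro K hK
  obtain ⟨M, hM⟩ := hK.exists_bound_of_continuousOn
    ((Real.continuous_exp.comp (continuous_const.mul continuous_id)).continuousOn)
  have : wMeasure ν K = ∫⁻ t in K, ENNReal.ofReal (Real.exp (-2 * ν * t)) ∂volume :=
    withDensity_apply _ hK.measurableSet
  rw [this]
  calc ∫⁻ t in K, ENNReal.ofReal (Real.exp (-2 * ν * t)) ∂volume
      ≤ ∫⁻ _ in K, ENNReal.ofReal M ∂volume := by
        apply setLIntegral_mono measurable_const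
        intro t ht
        exact ENNReal.ofReal_le_ofReal ((le_abs_self _).trans (hM t ht))
    _ = ENNReal.ofReal M * volume K := by rw [setLIntegral_const]
    _ < ⊤ := ENNReal.mul_lt_top ENNReal.ofReal_lt_top hK.measure_lt_top

lemma integral_wMeasure (ν : ℝ) (g : ℝ → ℝ) :
    ∫ t, g t ∂(wMeasure ν) = ∫ t, Real.exp (-2 * ν * t) * g t := by
  have hmeas : Measurable fun t : ℝ => Real.toNNReal (Real.exp (-2 * ν * t)) :=
    (Real.continuous_exp.comp (continuous_const.mul continuous_id)).measurable.real_toNNReal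
  rw [show wMeasure ν = volume.withDensity
      (fun t => ((Real.exp (-2 * ν * t)).toNNReal : ENNReal)) from rfl,
    integral_withDensity_eq_integral_smul hmeas]
  simp [NNReal.smul_def, Real.coe_toNNReal _ (Real.exp_nonneg _)]

attribute [local instance] InnerProductSpace.rclikeToReal

local notation "⟪" x ", " y "⟫ℝ" => @inner ℝ _ _ x y

-- the fundamental integration by parts identity on the real-valued level
lemma parts (ν : ℝ) {f : ℝ → H} (hf : ContDiff ℝ (⊤ : ℕ∞) f) (hs : HasCompactSupport f) :
    ∫ t, Real.exp (-2 * ν * t) * ⟪f t, deriv f t⟫ℝ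
      = ν * ∫ t, Real.exp (-2 * ν * t) * ‖f t‖ ^ 2 := by
  have hdiff : Differentiable ℝ f := hf.differentiable (by simp)
  have hcont' : Continuous (deriv f) := hf.continuous_deriv (by simp)
  -- the auxiliary function F
  set F : ℝ → ℝ := fun t => Real.exp (-2 * ν * t) * ⟪f t, f t⟫ℝ with hF
  have hFc : ContDiff ℝ 1 F :=
    ((Real.contDiff_exp.comp ((contDiff_const).mul contDiff_id)).mul
      (ContDiff.inner ℝ hf hf)).of_le (by simp)
  have hFs : HasCompactSupport F := by
    apply hs.mono'
    intro t ht
    by_contra h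
    exact ht (by simp [hF, image_eq_zero_of_notMem_tsupport h])
  have hFderiv : ∀ t, HasDerivAt F
      (Real.exp (-2 * ν * t) * (2 * ⟪f t, deriv f t⟫ℝ)
        + (Real.exp (-2 * ν * t) * (-2 * ν)) * ⟪f t, f t⟫ℝ) t := by
    intro t
    have he : HasDerivAt (fun t : ℝ => Real.exp (-2 * ν * t))
        (Real.exp (-2 * ν * t) * (-2 * ν)) t := by
      simpa using (((hasDerivAt_id t).const_mul (-2 * ν)).exp)
    have hi : HasDerivAt (fun t => ⟪f t, f t⟫ℝ)
        (2 * ⟪f t, deriv f t⟫ℝ) t := by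
      have h2 := HasDerivAt.inner ℝ (hdiff t).hasDerivAt (hdiff t).hasDerivAt
      convert h2 using 1
      · rfl
      · rfl
      · rw [two_mul, real_inner_comm]
    convert he.mul hi using 1
    · rfl
    · rfl
    · rfl
    · ring
  -- ∫ deriv F = 0
  have hderivF_cont : Continuous (deriv F) := hFc.continuous_deriv le_rfl
  have hderivF_supp : HasCompactSupport (deriv F) := hFs.deriv
  have hint0 : ∫ t, deriv F t = 0 := by
    have h1 := HasCompactSupport.integral_Iic_deriv_eq hFc hFs 0
    have h2 := HasCompactSupport.integral_Ioi_deriv_eq hFc hFs 0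
    have hintF : Integrable (deriv F) volume :=
      hderivF_cont.integrable_of_hasCompactSupport hderivF_supp
    have := intervalIntegral.integral_Iic_add_Ioi (b := (0:ℝ)) (μ := volume)
      hintF.integrableOn hintF.integrableOn
    rw [← this, h1, h2]; ring
  have hderivF : deriv F = fun t =>
      2 * (Real.exp (-2 * ν * t) * ⟪f t, deriv f t⟫ℝ)
        - 2 * ν * (Real.exp (-2 * ν * t) * ‖f t‖ ^ 2) := by
    funext t
    rw [(hFderiv t).deriv, real_inner_self_eq_norm_sq]
    ring
  rw [hderivF] at hint0
  -- integrability of the two pieces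
  have hia : Integrable (fun t => Real.exp (-2 * ν * t) * ⟪f t, deriv f t⟫ℝ) := by
    apply Continuous.integrable_of_hasCompactSupport
    · exact (Real.continuous_exp.comp (continuous_const.mul continuous_id)).mul
        ((hf.continuous.inner hcont'))
    · apply (hs.deriv).mono'
      intro t ht
      by_contra h
      exact ht (by simp [image_eq_zero_of_notMem_tsupport h])
  have hib : Integrable (fun t => Real.exp (-2 * ν * t) * ‖f t‖ ^ 2) := by
    apply Continuous.integrable_of_hasCompactSupport
    · exact (Real.continuous_exp.comp (continuous_const.mul continuous_id)).mul
        ((hf.continuous.norm).pow 2)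
    · apply hs.mono'
      intro t ht
      by_contra h
      exact ht (by simp [image_eq_zero_of_notMem_tsupport h])
  rw [integral_sub (hia.const_mul 2) (hib.const_mul (2 * ν)),
    integral_const_mul, integral_const_mul, sub_eq_zero] at hint0
  linarith

lemma core_id (ν : ℝ) {f : ℝ → H} (hf : ContDiff ℝ (⊤ : ℕ∞) f) (hs : HasCompactSupport f)
    (hm : MemLp f 2 (wMeasure ν)) (hm' : MemLp (deriv f) 2 (wMeasure ν)) :
    (inner ℂ (hm'.toLp (deriv f)) (hm.toLp f) : ℂ).re = ν * ‖hm.toLp f‖ ^ 2 := by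
  have hcont' : Continuous (deriv f) := hf.continuous_deriv (by simp)
  have hmono : ∀ g : ℝ → ℂ, (∀ t, f t = 0 → g t = 0) → HasCompactSupport g := by
    intro g hg
    apply hs.mono'
    intro t ht
    by_contra h
    exact ht (hg t (image_eq_zero_of_notMem_tsupport h))
  -- inner product as integral
  have h1 : (inner ℂ (hm'.toLp (deriv f)) (hm.toLp f) : ℂ)
      = ∫ t, (inner ℂ (deriv f t) (f t) : ℂ) ∂(wMeasure ν) := by
    rw [MeasureTheory.L2.inner_def]
    apply integral_congr_ae
    filter_upwards [hm'.coeFn_toLp, hm.coeFn_toLp] with t h1 h2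
    rw [h1, h2]
  have hint : Integrable (fun t => (inner ℂ (deriv f t) (f t) : ℂ)) (wMeasure ν) := by
    apply Continuous.integrable_of_hasCompactSupport (hcont'.inner hf.continuous)
    exact hmono _ (fun t ht => by simp [ht])
  have h2 : (inner ℂ (hm'.toLp (deriv f)) (hm.toLp f) : ℂ).re
      = ∫ t, ((inner ℂ (deriv f t) (f t) : ℂ)).re ∂(wMeasure ν) := by
    rw [h1]
    simpa using (integral_re hint).symm
  have h3 : ‖hm.toLp f‖ ^ 2 = ∫ t, ‖f t‖ ^ 2 ∂(wMeasure ν) := by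
    rw [InnerProductSpace.norm_sq_eq_re_inner (𝕜 := ℂ), MeasureTheory.L2.inner_def]
    have heq : ∫ t, (inner ℂ ((hm.toLp f) t) ((hm.toLp f) t) : ℂ)
        ∂(wMeasure ν) = ∫ t, (inner ℂ (f t) (f t) : ℂ) ∂(wMeasure ν) := by
      apply integral_congr_ae
      filter_upwards [hm.coeFn_toLp] with t h1
      rw [h1]
    rw [heq, ← integral_re]
    · apply integral_congr_ae
      filter_upwards with t
      exact (InnerProductSpace.norm_sq_eq_re_inner (𝕜 := ℂ) (f t)).symm
    · apply Continuous.integrable_of_hasCompactSupport (hf.continuous.inner hf.continuous)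
      exact hmono _ (fun t ht => by simp [ht])
  rw [h2, h3, integral_wMeasure, integral_wMeasure, ← parts ν hf hs]
  apply integral_congr_ae
  filter_upwards with t
  congr 1
  rw [real_inner_comm]
  rfl

lemma mem_derivGraph (ν : ℝ) (p : Hnu H ν × Hnu H ν) (hp : p ∈ derivGraph H ν) :
    ∃ (f : ℝ → H) (hf : MemLp f 2 (wMeasure ν))
      (hf' : MemLp (deriv f) 2 (wMeasure ν)),
      ContDiff ℝ (⊤ : ℕ∞) f ∧ HasCompactSupport f ∧ p = (hf.toLp f, hf'.toLp (deriv f)) := by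
  let S : Submodule ℂ (Hnu H ν × Hnu H ν) :=
    { carrier := {p | ∃ (f : ℝ → H) (hf : MemLp f 2 (wMeasure ν))
        (hf' : MemLp (deriv f) 2 (wMeasure ν)),
        ContDiff ℝ (⊤ : ℕ∞) f ∧ HasCompactSupport f ∧ p = (hf.toLp f, hf'.toLp (deriv f))}
      zero_mem' := by
        have hd : deriv (0 : ℝ → H) = 0 := by
          funext t
          exact deriv_const t 0
        have h0 : MemLp (0 : ℝ → H) 2 (wMeasure ν) := MemLp.zero
        have h0' : MemLp (deriv (0 : ℝ → H)) 2 (wMeasure ν) := by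
          rw [hd]; exact MemLp.zero
        have hcs : HasCompactSupport (0 : ℝ → H) := by
          simp [HasCompactSupport, tsupport]
        refine ⟨0, h0, h0', contDiff_zero_fun, hcs, ?_⟩
        have e2 : h0'.toLp (deriv (0 : ℝ → H)) = 0 := by
          rw [MemLp.toLp_congr h0' MemLp.zero (Filter.EventuallyEq.of_eq hd)]
          exact MemLp.toLp_zero _
        simp [Prod.ext_iff, MemLp.toLp_zero, e2]
      add_mem' := by
        rintro p q ⟨f, hf, hf', hfc, hfs, rfl⟩ ⟨g, hg, hg', hgc, hgs, rfl⟩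
        have hd : deriv (f + g) = deriv f + deriv g := funext fun t =>
          deriv_fun_add (hfc.differentiable (by simp) t) (hgc.differentiable (by simp) t)
        have hfg' : MemLp (deriv (f + g)) 2 (wMeasure ν) := by
          rw [hd]; exact hf'.add hg'
        refine ⟨f + g, hf.add hg, hfg', hfc.add hgc, hfs.add hgs, ?_⟩
        have e1 : (hf.add hg).toLp (f + g) = hf.toLp f + hg.toLp g :=
          MemLp.toLp_add hf hg
        have e2 : hfg'.toLp (deriv (f + g))
            = hf'.toLp (deriv f) + hg'.toLp (deriv g) := by
          rw [MemLp.toLp_congr hfg' (hf'.add hg') (Filter.EventuallyEq.of_eq hd)]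
          exact MemLp.toLp_add hf' hg'
        simp [Prod.ext_iff, e1, e2]
      smul_mem' := by
        rintro c p ⟨f, hf, hf', hfc, hfs, rfl⟩
        have hd : deriv (c • f) = c • deriv f := funext fun t =>
          deriv_const_smul c (hfc.differentiable (by simp) t)
        have hcf' : MemLp (deriv (c • f)) 2 (wMeasure ν) := by
          rw [hd]; exact hf'.const_smul c
        have hcs : HasCompactSupport (c • f) :=
          hfs.mono' ((Function.support_const_smul_subset c f).trans subset_closure)
        refine ⟨c • f, hf.const_smul c, hcf', hfc.const_smul c, hcs, ?_⟩
        have e1 : (hf.const_smul c).toLp (c • f) = c • hf.toLp f :=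
          MemLp.toLp_const_smul c hf
        have e2 : hcf'.toLp (deriv (c • f)) = c • hf'.toLp (deriv f) := by
          rw [MemLp.toLp_congr hcf' (hf'.const_smul c) (Filter.EventuallyEq.of_eq hd)]
          exact MemLp.toLp_const_smul c hf'
        simp [Prod.ext_iff, e1, e2] }
  have hSeq : derivGraph H ν = S := by
    rw [derivGraph, show {p : Hnu H ν × Hnu H ν | ∃ (f : ℝ → H)
      (hf : MemLp f 2 (wMeasure ν)) (hf' : MemLp (deriv f) 2 (wMeasure ν)),
      ContDiff ℝ (⊤ : ℕ∞) f ∧ HasCompactSupport f ∧ p = (hf.toLp f, hf'.toLp (deriv f))}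
        = (S : Set _) from rfl, Submodule.span_eq]
  rw [hSeq] at hp
  exact hp

lemma derivGraph_is_graph (ν : ℝ) :
    ∀ x ∈ derivGraph H ν, x.1 = 0 → x.2 = 0 := by
  intro x hx hx1
  obtain ⟨f, hf, hf', hfc, hfs, rfl⟩ := mem_derivGraph ν x hx
  simp only at hx1 ⊢
  -- x.1 = toLp f = 0 gives f = 0
  have hf0 : f =ᵐ[wMeasure ν] 0 := by
    rw [← MemLp.toLp_zero (MemLp.zero : MemLp (0 : ℝ → H) 2 (wMeasure ν)),
      MemLp.toLp_eq_toLp_iff] at hx1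
    exact hx1
  have hac : (volume : Measure ℝ) ≪ wMeasure ν := by
    apply withDensity_absolutelyContinuous'
    · exact (Real.continuous_exp.comp
        (continuous_const.mul continuous_id)).measurable.ennreal_ofReal.aemeasurable
    · filter_upwards with t
      simp [Real.exp_pos]
  have hf0' : f =ᵐ[volume] 0 := hac.ae_eq hf0
  have hfz : f = 0 :=
    (Continuous.ae_eq_iff_eq volume hfc.continuous
      (continuous_const : Continuous fun _ : ℝ => (0 : H))).mp hf0'
  subst hfz
  have hd : deriv (0 : ℝ → H) =ᵐ[wMeasure ν] 0 := by
    filter_upwards with t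
    exact deriv_const t 0
  rw [MemLp.toLp_congr hf' MemLp.zero hd]
  exact MemLp.toLp_zero _

lemma D0_graph_le (ν : ℝ) :
    (D0 H ν).graph ≤ (derivGraph H ν).topologicalClosure := by
  have hgr : (derivGraph H ν).toLinearPMap.graph = derivGraph H ν :=
    Submodule.toLinearPMap_graph_eq _ (fun x hx hx1 => derivGraph_is_graph ν x hx hx1)
  by_cases hc : (derivGraph H ν).toLinearPMap.IsClosable
  · rw [show D0 H ν = (derivGraph H ν).toLinearPMap.closure from rfl,
      ← hc.graph_closure_eq_closure_graph, hgr]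
  · rw [show D0 H ν = (derivGraph H ν).toLinearPMap.closure from rfl,
      LinearPMap.closure_def' hc, hgr]
    exact (derivGraph H ν).le_topologicalClosure

lemma Q_vanishes (ν : ℝ) (p : Hnu H ν × Hnu H ν)
    (hp : p ∈ (derivGraph H ν).topologicalClosure) :
    (inner ℂ p.2 p.1 : ℂ).re = ν * ‖p.1‖ ^ 2 := by
  have hclosed : IsClosed {p : Hnu H ν × Hnu H ν |
      (inner ℂ p.2 p.1 : ℂ).re = ν * ‖p.1‖ ^ 2} := by
    apply isClosed_eq
    · exact Complex.continuous_re.comp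
        (continuous_inner.comp (continuous_snd.prodMk continuous_fst))
    · exact continuous_const.mul ((continuous_norm.comp continuous_fst).pow 2)
  have hsub : (derivGraph H ν : Set (Hnu H ν × Hnu H ν)) ⊆ {p |
      (inner ℂ p.2 p.1 : ℂ).re = ν * ‖p.1‖ ^ 2} := by
    intro q hq
    obtain ⟨f, hf, hf', hfc, hfs, rfl⟩ := mem_derivGraph ν q hq
    exact core_id ν hfc hfs hf hf'
  have hp' : p ∈ closure (derivGraph H ν : Set (Hnu H ν × Hnu H ν)) := by
    rw [← Submodule.topologicalClosure_coe]
    exact hp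
  exact hclosed.closure_subset_iff.mpr hsub hp'

/-- For every `u` in the domain of `∂₀` one has
`Re⟪∂₀ u, u⟫_{ν,0,0} = ν ‖u‖²_{ν,0,0}`; in particular `∂₀` is strictly positive definite on
the real Hilbert space `(H_{ν,0}(ℝ,H), Re⟪·,·⟫)`. -/
theorem D0_strictly_positive (ν : ℝ) (hν : 0 < ν) :
    (∀ u (hu : u ∈ (D0 H ν).domain),
      (inner ℂ (D0 H ν ⟨u, hu⟩) u : ℂ).re = ν * ‖u‖ ^ 2) ∧
    (∀ u (hu : u ∈ (D0 H ν).domain), u ≠ 0 →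
      0 < (inner ℂ (D0 H ν ⟨u, hu⟩) u : ℂ).re) := by
  have key : ∀ u (hu : u ∈ (D0 H ν).domain),
      (inner ℂ (D0 H ν ⟨u, hu⟩) u : ℂ).re = ν * ‖u‖ ^ 2 := by
    intro u hu
    have hmem := LinearPMap.mem_graph (D0 H ν) ⟨u, hu⟩
    exact Q_vanishes ν _ (D0_graph_le ν hmem)
  refine ⟨key, ?_⟩
  intro u hu hu0
  rw [key u hu]
  exact mul_pos hν (pow_pos (norm_pos_iff.mpr hu0) 2)
end
end

section
/- Let A and B be skew-selfadjoint operators on a Hilbert space H such that AB = 0 and BA = 0 (the compositions vanish on their natural domains, which are cores). Then A + B, defined on D(A) ∩ D(B), is skew-selfadjoint. -/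
noncomputable section

open LinearPMap

local notation "⟪" x ", " y "⟫" => @inner ℂ _ _ x y

namespace SkewSumAux

variable {H : Type*} [NormedAddCommGroup H] [InnerProductSpace ℂ H] [CompleteSpace H]

theorem domain_adj {T : H →ₗ.[ℂ] H} (hT : T.adjoint = -T) : T.adjoint.domain = T.domain := by
  rw [hT]; rfl

theorem skew_apply {T : H →ₗ.[ℂ] H} (hT : T.adjoint = -T) {u : H} (hu' : u ∈ T.adjoint.domain)
    (hu : u ∈ T.domain) : T.adjoint ⟨u, hu'⟩ = -(T ⟨u, hu⟩) := by
  obtain ⟨hd, hv⟩ := LinearPMap.ext_iff.mp hT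
  exact (hv (x := u) (hf := hu') (hg := hu)).trans (T.neg_apply ⟨u, hu⟩)

theorem ker_of_orth {T : H →ₗ.[ℂ] H} (hTd : Dense (T.domain : Set H)) (hT : T.adjoint = -T)
    {u : H} (hu : u ∈ (LinearMap.range T.toFun)ᗮ) :
    ∃ h : u ∈ T.domain, T ⟨u, h⟩ = 0 := by
  have hzero : ∀ x : T.domain, ⟪(0 : H), (x : H)⟫ = ⟪u, T x⟫ := by
    intro x
    have h0 : ⟪T x, u⟫ = (0 : ℂ) :=
      (Submodule.mem_orthogonal _ u).mp hu (T x) ⟨x, rfl⟩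
    rw [inner_zero_left, ← inner_conj_symm, h0, _root_.map_zero]
  have hmem : u ∈ T.adjoint.domain := mem_adjoint_domain_of_exists _ ⟨0, hzero⟩
  have hval : T.adjoint ⟨u, hmem⟩ = 0 := adjoint_apply_eq hTd _ hzero
  refine ⟨domain_adj hT ▸ hmem, ?_⟩
  have h2 := skew_apply hT hmem (domain_adj hT ▸ hmem)
  rw [hval] at h2
  rw [← neg_neg (T ⟨u, _⟩), ← h2, neg_zero]

theorem orth_of_ker {T : H →ₗ.[ℂ] H} (hTd : Dense (T.domain : Set H)) (hT : T.adjoint = -T)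
    (x : T.domain) (hx : T x = 0) : (x : H) ∈ (LinearMap.range T.toFun)ᗮ := by
  rw [Submodule.mem_orthogonal]
  rintro _ ⟨y, rfl⟩
  have hx' : (x : H) ∈ T.adjoint.domain := (domain_adj hT).symm ▸ x.2
  have h1 : ⟪T y, ((⟨(x : H), hx'⟩ : T.adjoint.domain) : H)⟫ = ⟪(y : H), T.adjoint ⟨(x : H), hx'⟩⟫ :=
    (adjoint_isFormalAdjoint hTd).symm y ⟨(x : H), hx'⟩
  have h2 : T.adjoint ⟨(x : H), hx'⟩ = -(T ⟨(x : H), x.2⟩) := skew_apply hT hx' x.2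
  have h3 : T ⟨(x : H), x.2⟩ = 0 := hx
  rw [h2, h3, neg_zero, inner_zero_right] at h1
  exact h1

theorem skew_inner {T : H →ₗ.[ℂ] H} (hTd : Dense (T.domain : Set H)) (hT : T.adjoint = -T)
    (p q : T.domain) : ⟪T p, (q : H)⟫ = ⟪(p : H), -(T q)⟫ := by
  have hq : (q : H) ∈ T.adjoint.domain := (domain_adj hT).symm ▸ q.2
  have h2 : T.adjoint ⟨(q : H), hq⟩ = -(T ⟨(q : H), q.2⟩) := skew_apply hT hq q.2
  calc ⟪T p, (q : H)⟫ = ⟪(p : H), T.adjoint ⟨(q : H), hq⟩⟫ :=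
        (adjoint_isFormalAdjoint hTd).symm p ⟨(q : H), hq⟩
    _ = ⟪(p : H), -(T q)⟫ := by rw [h2]

instance myOrthInst (K : Submodule ℂ H) : Submodule.HasOrthogonalProjection Kᗮ :=
  Submodule.HasOrthogonalProjection.ofCompleteSpace Kᗮ

theorem step (A B : H →ₗ.[ℂ] H)
    (hAdense : Dense (A.domain : Set H)) (hBdense : Dense (B.domain : Set H))
    (hSdense : Dense (((A + B).domain : Set H)))
    (hA : A.adjoint = -A) (hB : B.adjoint = -B)
    (hBA : ∀ u (hu : u ∈ A.domain),
      ∃ h : A ⟨u, hu⟩ ∈ B.domain, B ⟨A ⟨u, hu⟩, h⟩ = 0)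
    (v : (A + B).adjoint.domain) :
    ∃ ha : (v : H) ∈ A.domain,
      A ⟨(v : H), ha⟩ =
        (Submodule.orthogonalProjection (LinearMap.range A.toFun)ᗮ ((A + B).adjoint v) : H)
          - (A + B).adjoint v ∧
      (A + B).adjoint v -
        (Submodule.orthogonalProjection (LinearMap.range A.toFun)ᗮ ((A + B).adjoint v) : H)
        ∈ LinearMap.range A.toFun := by
  have RAleNB : LinearMap.range A.toFun ≤ (LinearMap.range B.toFun)ᗮ := by
    rintro _ ⟨y, rfl⟩
    obtain ⟨h, h0⟩ := hBA (y : H) y.2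
    exact orth_of_ker hBdense hB ⟨A ⟨(y : H), y.2⟩, h⟩ h0
  have NAorth : ((LinearMap.range A.toFun)ᗮ)ᗮ ≤ (LinearMap.range B.toFun)ᗮ := by
    rw [Submodule.orthogonal_orthogonal_eq_closure]
    exact Submodule.topologicalClosure_minimal _ RAleNB
      (Submodule.isClosed_orthogonal _)
  have hcalc : ∀ u : A.domain,
      ⟪(A + B).adjoint v
        - (Submodule.orthogonalProjection (LinearMap.range A.toFun)ᗮ ((A + B).adjoint v) : H), (u : H)⟫
      = ⟪(v : H), A u⟫ := by
    intro u
    have hpuNA : ((Submodule.orthogonalProjection (LinearMap.range A.toFun)ᗮ (u : H) : H))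
        ∈ (LinearMap.range A.toFun)ᗮ := SetLike.coe_mem _
    obtain ⟨hpuA, hpuA0⟩ := ker_of_orth hAdense hA hpuNA
    have hu1NB : (u : H) - (Submodule.orthogonalProjection (LinearMap.range A.toFun)ᗮ (u : H) : H)
        ∈ (LinearMap.range B.toFun)ᗮ :=
      NAorth (Submodule.sub_starProjection_mem_orthogonal (K := (LinearMap.range A.toFun)ᗮ) (u : H))
    obtain ⟨hu1B, hu1B0⟩ := ker_of_orth hBdense hB hu1NB
    have hu1A : (u : H) - (Submodule.orthogonalProjection (LinearMap.range A.toFun)ᗮ (u : H) : H)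
        ∈ A.domain := sub_mem u.2 hpuA
    have hu1S : (u : H) - (Submodule.orthogonalProjection (LinearMap.range A.toFun)ᗮ (u : H) : H)
        ∈ (A + B).domain := ⟨hu1A, hu1B⟩
    have hAsub : A ⟨(u : H) - (Submodule.orthogonalProjection (LinearMap.range A.toFun)ᗮ (u : H) : H),
        hu1A⟩ = A u := by
      have hsplit : (⟨(u : H) - (Submodule.orthogonalProjection (LinearMap.range A.toFun)ᗮ (u : H) : H),
            hu1A⟩ : A.domain)
          = ⟨(u : H), u.2⟩
            - ⟨(Submodule.orthogonalProjection (LinearMap.range A.toFun)ᗮ (u : H) : H), hpuA⟩ := rfl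
      rw [hsplit, A.map_sub, hpuA0, sub_zero]
    have hScalc : (A + B) ⟨(u : H)
        - (Submodule.orthogonalProjection (LinearMap.range A.toFun)ᗮ (u : H) : H), hu1S⟩ = A u := by
      calc (A + B) ⟨(u : H)
            - (Submodule.orthogonalProjection (LinearMap.range A.toFun)ᗮ (u : H) : H), hu1S⟩
          = A ⟨(u : H) - (Submodule.orthogonalProjection (LinearMap.range A.toFun)ᗮ (u : H) : H), hu1A⟩
            + B ⟨(u : H) - (Submodule.orthogonalProjection (LinearMap.range A.toFun)ᗮ (u : H) : H),
                hu1B⟩ := rfl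
        _ = A u := by rw [hAsub, hu1B0, add_zero]
    calc ⟪(A + B).adjoint v
          - (Submodule.orthogonalProjection (LinearMap.range A.toFun)ᗮ ((A + B).adjoint v) : H), (u : H)⟫
        = ⟪(A + B).adjoint v, (u : H)⟫
          - ⟪(Submodule.orthogonalProjection (LinearMap.range A.toFun)ᗮ ((A + B).adjoint v) : H),
              (u : H)⟫ := inner_sub_left _ _ _
      _ = ⟪(A + B).adjoint v, (u : H)⟫
          - ⟪(A + B).adjoint v,
              (Submodule.orthogonalProjection (LinearMap.range A.toFun)ᗮ (u : H) : H)⟫ := by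
            exact congrArg _ (Submodule.inner_starProjection_left_eq_right _ _ _)
      _ = ⟪(A + B).adjoint v,
            (u : H) - (Submodule.orthogonalProjection (LinearMap.range A.toFun)ᗮ (u : H) : H)⟫ :=
            (inner_sub_right _ _ _).symm
      _ = ⟪(v : H), (A + B) ⟨(u : H)
            - (Submodule.orthogonalProjection (LinearMap.range A.toFun)ᗮ (u : H) : H), hu1S⟩⟫ :=
            adjoint_isFormalAdjoint hSdense v ⟨_, hu1S⟩
      _ = ⟪(v : H), A u⟫ := by rw [hScalc]
  have hvA' : (v : H) ∈ A.adjoint.domain :=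
    mem_adjoint_domain_of_exists _
      ⟨(A + B).adjoint v
        - (Submodule.orthogonalProjection (LinearMap.range A.toFun)ᗮ ((A + B).adjoint v) : H), hcalc⟩
  have hvA'val : A.adjoint ⟨(v : H), hvA'⟩ =
      (A + B).adjoint v
        - (Submodule.orthogonalProjection (LinearMap.range A.toFun)ᗮ ((A + B).adjoint v) : H) :=
    adjoint_apply_eq hAdense _ hcalc
  have h2 := skew_apply hA hvA' (domain_adj hA ▸ hvA')
  rw [hvA'val] at h2
  refine ⟨domain_adj hA ▸ hvA', ?_, ?_⟩
  · rw [← neg_neg (A ⟨(v : H), domain_adj hA ▸ hvA'⟩), ← h2, neg_sub]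
  · rw [h2]
    exact neg_mem (LinearMap.mem_range_self _ _)

theorem range_le_orth (A B : H →ₗ.[ℂ] H) (hBdense : Dense (B.domain : Set H))
    (hB : B.adjoint = -B)
    (hBA : ∀ u (hu : u ∈ A.domain),
      ∃ h : A ⟨u, hu⟩ ∈ B.domain, B ⟨A ⟨u, hu⟩, h⟩ = 0) :
    LinearMap.range A.toFun ≤ (LinearMap.range B.toFun)ᗮ := by
  rintro _ ⟨y, rfl⟩
  obtain ⟨h, h0⟩ := hBA (y : H) y.2
  exact orth_of_ker hBdense hB ⟨A ⟨(y : H), y.2⟩, h⟩ h0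

omit [CompleteSpace H] in
theorem inner_proj (N : Submodule ℂ H) [Submodule.HasOrthogonalProjection N] {z : H} (w : H)
    (hz : z ∈ N) : ⟪z, (Submodule.orthogonalProjection N w : H)⟫ = ⟪z, w⟫ := by
  exact (Submodule.inner_starProjection_left_eq_right N z w).symm.trans
    (by rw [Submodule.starProjection_eq_self_iff.mpr hz])

end SkewSumAux

open SkewSumAux

/-- Let `A`, `B` be densely defined skew-selfadjoint operators on a complex
Hilbert space `H` such that `AB = 0` and `BA = 0` (i.e. `ran(B) ⊆ ker(A)` and
`ran(A) ⊆ ker(B)`).  Then `A + B` (defined on `D(A) ∩ D(B)`) is skew-selfadjoint. -/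
theorem sum_skewSelfAdjoint_of_annihilating {H : Type*} [NormedAddCommGroup H]
    [InnerProductSpace ℂ H] [CompleteSpace H]
    (A B : H →ₗ.[ℂ] H)
    (hAdense : Dense (A.domain : Set H)) (hBdense : Dense (B.domain : Set H))
    (hSdense : Dense (((A + B).domain : Set H)))
    (hA : A.adjoint = -A) (hB : B.adjoint = -B)
    (hAB : ∀ u (hu : u ∈ B.domain),
      ∃ h : B ⟨u, hu⟩ ∈ A.domain, A ⟨B ⟨u, hu⟩, h⟩ = 0)
    (hBA : ∀ u (hu : u ∈ A.domain),
      ∃ h : A ⟨u, hu⟩ ∈ B.domain, B ⟨A ⟨u, hu⟩, h⟩ = 0) :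
    (A + B).adjoint = -(A + B) := by
  have hcomm : A + B = B + A := add_comm A B
  obtain ⟨hdcomm, hvcomm⟩ := LinearPMap.ext_iff.mp (congrArg (fun T : H →ₗ.[ℂ] H => T.adjoint) hcomm)
  have hSdense' : Dense (((B + A).domain : Set H)) := by rwa [← hcomm]
  have key : ∀ v : (A + B).adjoint.domain,
      ∃ (ha : (v : H) ∈ A.domain) (hb : (v : H) ∈ B.domain),
        A ⟨(v : H), ha⟩ + B ⟨(v : H), hb⟩ = -((A + B).adjoint v) := by
    intro v
    obtain ⟨ha, haval, hRA⟩ := step A B hAdense hBdense hSdense hA hB hBA v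
    have hv' : (v : H) ∈ (B + A).adjoint.domain := hdcomm ▸ v.2
    have hwEq : (A + B).adjoint v = (B + A).adjoint ⟨(v : H), hv'⟩ := @hvcomm (v : H) v.2 hv'
    obtain ⟨hb, hbval, hRB⟩ := step B A hBdense hAdense hSdense' hB hA hAB ⟨(v : H), hv'⟩
    rw [← hwEq] at hbval hRB
    -- memberships
    have hwpwNB : (A + B).adjoint v
        - (Submodule.orthogonalProjection (LinearMap.range A.toFun)ᗮ ((A + B).adjoint v) : H)
        ∈ (LinearMap.range B.toFun)ᗮ := range_le_orth A B hBdense hB hBA hRA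
    have hwqwNA : (A + B).adjoint v
        - (Submodule.orthogonalProjection (LinearMap.range B.toFun)ᗮ ((A + B).adjoint v) : H)
        ∈ (LinearMap.range A.toFun)ᗮ := range_le_orth B A hAdense hA hAB hRB
    have hzNA : (A + B).adjoint v
        - (Submodule.orthogonalProjection (LinearMap.range A.toFun)ᗮ ((A + B).adjoint v) : H)
        - (Submodule.orthogonalProjection (LinearMap.range B.toFun)ᗮ ((A + B).adjoint v) : H)
        ∈ (LinearMap.range A.toFun)ᗮ := by
      have h := sub_mem hwqwNA
        (SetLike.coe_mem (Submodule.orthogonalProjection (LinearMap.range A.toFun)ᗮ ((A + B).adjoint v)))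
      rwa [sub_right_comm] at h
    have hzNB : (A + B).adjoint v
        - (Submodule.orthogonalProjection (LinearMap.range A.toFun)ᗮ ((A + B).adjoint v) : H)
        - (Submodule.orthogonalProjection (LinearMap.range B.toFun)ᗮ ((A + B).adjoint v) : H)
        ∈ (LinearMap.range B.toFun)ᗮ := sub_mem hwpwNB
        (SetLike.coe_mem (Submodule.orthogonalProjection (LinearMap.range B.toFun)ᗮ ((A + B).adjoint v)))
    obtain ⟨hzAd, hzA0⟩ := ker_of_orth hAdense hA hzNA
    obtain ⟨hzBd, hzB0⟩ := ker_of_orth hBdense hB hzNB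
    have hzS : (A + B).adjoint v
        - (Submodule.orthogonalProjection (LinearMap.range A.toFun)ᗮ ((A + B).adjoint v) : H)
        - (Submodule.orthogonalProjection (LinearMap.range B.toFun)ᗮ ((A + B).adjoint v) : H)
        ∈ (A + B).domain := ⟨hzAd, hzBd⟩
    have hSz : (A + B) ⟨_, hzS⟩ = 0 := by
      calc (A + B) ⟨_, hzS⟩ = A ⟨_, hzAd⟩ + B ⟨_, hzBd⟩ := rfl
        _ = 0 := by rw [hzA0, hzB0, add_zero]
    have hwz : ⟪(A + B).adjoint v, (A + B).adjoint v
        - (Submodule.orthogonalProjection (LinearMap.range A.toFun)ᗮ ((A + B).adjoint v) : H)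
        - (Submodule.orthogonalProjection (LinearMap.range B.toFun)ᗮ ((A + B).adjoint v) : H)⟫ = 0 := by
      have h1 := adjoint_isFormalAdjoint hSdense v (⟨_, hzS⟩ : ↥(A + B).domain)
      rw [hSz, inner_zero_right] at h1
      exact h1
    have hz0 : (A + B).adjoint v
        - (Submodule.orthogonalProjection (LinearMap.range A.toFun)ᗮ ((A + B).adjoint v) : H)
        - (Submodule.orthogonalProjection (LinearMap.range B.toFun)ᗮ ((A + B).adjoint v) : H) = 0 := by
      apply (inner_self_eq_zero (𝕜 := ℂ)).mp
      have e1 := inner_proj (LinearMap.range A.toFun)ᗮ ((A + B).adjoint v) hzNA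
      have e2 := inner_proj (LinearMap.range B.toFun)ᗮ ((A + B).adjoint v) hzNB
      have e3 : ⟪(A + B).adjoint v
          - (Submodule.orthogonalProjection (LinearMap.range A.toFun)ᗮ ((A + B).adjoint v) : H)
          - (Submodule.orthogonalProjection (LinearMap.range B.toFun)ᗮ ((A + B).adjoint v) : H),
          (A + B).adjoint v⟫ = 0 := by
        rw [← inner_conj_symm, hwz, _root_.map_zero]
      rw [inner_sub_right, inner_sub_right, e1, e2, e3]
      simp
    refine ⟨ha, hb, ?_⟩
    rw [haval, hbval]
    have habel : ∀ x y c : H, c - x - y = 0 → x - c + (y - c) = -c := by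
      intro x y c h
      have hc : c = x + y := by rwa [sub_sub, sub_eq_zero] at h
      rw [hc]; abel
    exact habel _ _ _ hz0
  -- easy direction
  have easy : -(A + B) ≤ (A + B).adjoint := by
    apply IsFormalAdjoint.le_adjoint hSdense
    intro x y
    have hya : (y : H) ∈ A.domain := y.2.1
    have hyb : (y : H) ∈ B.domain := y.2.2
    have hxa : (x : H) ∈ A.domain := x.2.1
    have hxb : (x : H) ∈ B.domain := x.2.2
    have hx : (A + B) x = A ⟨(x : H), hxa⟩ + B ⟨(x : H), hxb⟩ := rfl
    have hy : (-(A + B)) y = -(A ⟨(y : H), hya⟩ + B ⟨(y : H), hyb⟩) := rfl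
    calc ⟪(A + B) x, (y : H)⟫
        = ⟪A ⟨(x : H), hxa⟩, (y : H)⟫ + ⟪B ⟨(x : H), hxb⟩, (y : H)⟫ := by
          rw [hx, inner_add_left]
      _ = ⟪(x : H), -(A ⟨(y : H), hya⟩)⟫ + ⟪(x : H), -(B ⟨(y : H), hyb⟩)⟫ :=
          congrArg₂ (· + ·) (skew_inner hAdense hA ⟨(x : H), hxa⟩ ⟨(y : H), hya⟩)
            (skew_inner hBdense hB ⟨(x : H), hxb⟩ ⟨(y : H), hyb⟩)
      _ = ⟪(x : H), -(A ⟨(y : H), hya⟩) + -(B ⟨(y : H), hyb⟩)⟫ := (inner_add_right _ _ _).symm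
      _ = ⟪(x : H), (-(A + B)) y⟫ := by
          rw [hy, neg_add (A ⟨(y : H), hya⟩) (B ⟨(y : H), hyb⟩)]
  have hard : (A + B).adjoint ≤ -(A + B) := by
    constructor
    · intro v hv
      obtain ⟨ha, hb, -⟩ := key ⟨v, hv⟩
      exact ⟨ha, hb⟩
    · intro x y hxy
      obtain ⟨ha, hb, hval⟩ := key x
      have h2 : (A + B).adjoint x = -(A ⟨(x : H), ha⟩ + B ⟨(x : H), hb⟩) :=
        neg_eq_iff_eq_neg.mp hval.symm
      have hy : (-(A + B)) y = -(A ⟨(y : H), y.2.1⟩ + B ⟨(y : H), y.2.2⟩) := rfl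
      rw [h2, hy, show (⟨(x : H), ha⟩ : A.domain) = ⟨(y : H), y.2.1⟩ from Subtype.ext hxy,
        show (⟨(x : H), hb⟩ : B.domain) = ⟨(y : H), y.2.2⟩ from Subtype.ext hxy]
  exact le_antisymm hard easy
end
end
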